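/- arXiv:2102.00236 — 3 statements merged into one kernel-verified Lean document; each statement's English description precedes it below -/
import Mathlib

section
/- For all x ≥ 0, the Lambert W function (inverse of x ↦ x·e^x on [0,∞)) satisfies (1/2)·ln(1+x) ≤ W(x) ≤ ln(1+x). -/
/-! Writing `x = w * exp w`, both bounds reduce to `exp w ≤ 1 + w * exp w ≤ exp (2 * w)`,
which follow from `1 + t ≤ exp t` at `t = -w` and `t = w`. -/

open Real

theorem exp_le_one_add_mul_exp (w : ℝ) : exp w ≤ 1 + w * exp w := by
  have h : 1 - w ≤ exp (-w) := by linarith [add_one_le_exp (-w)]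
  have := mul_le_mul_of_nonneg_right h (exp_pos w).le
  rw [exp_neg, inv_mul_cancel₀ (exp_pos w).ne'] at this
  linarith

theorem one_add_mul_exp_le_exp_two_mul {w : ℝ} (hw : 0 ≤ w) : 1 + w * exp w ≤ exp (2 * w) :=
  calc 1 + w * exp w ≤ exp w + w * exp w := by linarith [one_le_exp hw]
    _ = (w + 1) * exp w := by ring
    _ ≤ exp w * exp w := mul_le_mul_of_nonneg_right (add_one_le_exp w) (exp_pos w).le
    _ = exp (2 * w) := by rw [two_mul, exp_add]

theorem le_log_one_add_mul_exp (w : ℝ) : w ≤ log (1 + w * exp w) :=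
  (le_log_iff_exp_le ((exp_pos w).trans_le (exp_le_one_add_mul_exp w))).2
    (exp_le_one_add_mul_exp w)

theorem log_one_add_mul_exp_le_two_mul {w : ℝ} (hw : 0 ≤ w) : log (1 + w * exp w) ≤ 2 * w :=
  (log_le_iff_le_exp (by positivity)).2 (one_add_mul_exp_le_exp_two_mul hw)

/-- Bounds on the Lambert W function: if `W` is the inverse of `x ↦ x * exp x` on `[0, ∞)`,
then `(1/2) * log (1+x) ≤ W x ≤ log (1+x)` for all `x ≥ 0`. -/
theorem stmt_0 (W : ℝ → ℝ)
    (hW_nonneg : ∀ x, 0 ≤ x → 0 ≤ W x)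
    (hW_inv : ∀ x, 0 ≤ x → W x * Real.exp (W x) = x) :
    ∀ x, 0 ≤ x →
      (1/2) * Real.log (1 + x) ≤ W x ∧ W x ≤ Real.log (1 + x) := by
  intro x hx
  obtain ⟨w, hw, hWx, rfl⟩ : ∃ w, 0 ≤ w ∧ W (w * exp w) = w ∧ w * exp w = x :=
    ⟨W x, hW_nonneg x hx, by rw [hW_inv x hx], hW_inv x hx⟩
  rw [hWx]
  exact ⟨by linarith [log_one_add_mul_exp_le_two_mul hw], le_log_one_add_mul_exp w⟩
end

section
/- Let η₁ ≥ η₂ ≥ ⋯ ≥ η_T ≥ 0 and q₁,…,q_T ≥ 0 be real numbers. Then η_T·q_T ≤ (1/T)·∑_{t=1}^T η_t·q_t + ∑_{k=1}^{T-1} (1/(k(k+1)))·∑_{t=T-k}^T η_t·(q_t − q_{T−k}). -/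
open Finset

/-!
Let `S k` (`tailAverage`) be the average of `η t * q t` over the last `k + 1` indices
`T - k, …, T`, so that `S 0 = η T * q T` and `S (T - 1)` is the full average. Passing from
`S (k - 1)` to `S k` adds the index `a = T - k`. The `k`-th correction term minus the loss
`S (k - 1) - S k` equals `q a * (k * η a - ∑ t ∈ Icc (a + 1) T, η t) / (k * (k + 1))`, which is
nonnegative because `η` is nonincreasing. Summing over `k` telescopes.
-/

lemma average_le_average_insert_add {ι : Type*} [DecidableEq ι] {s : Finset ι} {a : ι}
    (ha : a ∉ s) (hs : s.Nonempty) {η q : ι → ℝ} (hη : ∀ t ∈ s, η t ≤ η a) (hq : 0 ≤ q a) :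
    1 / (#s : ℝ) * ∑ t ∈ s, η t * q t ≤
      1 / ((#s : ℝ) + 1) * ∑ t ∈ insert a s, η t * q t
        + 1 / ((#s : ℝ) * ((#s : ℝ) + 1)) * ∑ t ∈ insert a s, η t * (q t - q a) := by
  have hk : (0 : ℝ) < #s := by exact_mod_cast hs.card_pos
  have hη_sum : ∑ t ∈ s, η t ≤ #s * η a := by
    simpa using sum_le_sum hη
  have hdev : ∑ t ∈ insert a s, η t * (q t - q a)
      = ∑ t ∈ s, η t * q t - q a * ∑ t ∈ s, η t := by
    rw [sum_insert ha, sub_self, mul_zero, zero_add, mul_sum, ← sum_sub_distrib]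
    exact sum_congr rfl fun t _ => by ring
  rw [sum_insert ha, hdev, ← sub_nonneg]
  have key : 1 / ((#s : ℝ) + 1) * (η a * q a + ∑ t ∈ s, η t * q t)
        + 1 / ((#s : ℝ) * ((#s : ℝ) + 1)) * (∑ t ∈ s, η t * q t - q a * ∑ t ∈ s, η t)
        - 1 / (#s : ℝ) * ∑ t ∈ s, η t * q t
      = q a * (#s * η a - ∑ t ∈ s, η t) / (#s * (#s + 1)) := by
    field_simp
    ring
  rw [key]
  exact div_nonneg (mul_nonneg hq (by linarith)) (by positivity)

lemma le_add_sum_Icc_of_le_add {u d : ℕ → ℝ} {m : ℕ}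
    (h : ∀ k < m, u k ≤ u (k + 1) + d (k + 1)) :
    u 0 ≤ u m + ∑ k ∈ Icc 1 m, d k := by
  induction m with
  | zero => simp
  | succ m ih =>
    have hprev := ih fun k hk => h k (by omega)
    rw [sum_Icc_succ_top (by omega)]
    linarith [h m (by omega)]

noncomputable def tailAverage (f : ℕ → ℝ) (T k : ℕ) : ℝ :=
  1 / ((k : ℝ) + 1) * ∑ t ∈ Icc (T - k) T, f t

lemma tailAverage_zero (f : ℕ → ℝ) (T : ℕ) : tailAverage f T 0 = f T := by
  simp [tailAverage]

lemma tailAverage_sub_one {T : ℕ} (hT : 1 ≤ T) (f : ℕ → ℝ) :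
    tailAverage f T (T - 1) = 1 / (T : ℝ) * ∑ t ∈ Icc 1 T, f t := by
  rw [tailAverage, Nat.sub_sub_self hT, Nat.cast_sub hT, Nat.cast_one, sub_add_cancel]

lemma tailAverage_le_succ_add {T k : ℕ} (hk : k + 2 ≤ T) {η q : ℕ → ℝ}
    (hη : ∀ t ∈ Icc (T - k) T, η t ≤ η (T - (k + 1))) (hq : 0 ≤ q (T - (k + 1))) :
    tailAverage (fun t => η t * q t) T k ≤ tailAverage (fun t => η t * q t) T (k + 1)
      + 1 / (((k + 1 : ℕ) : ℝ) * (((k + 1 : ℕ) : ℝ) + 1)) *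
          ∑ t ∈ Icc (T - (k + 1)) T, η t * (q t - q (T - (k + 1))) := by
  have hcard : #(Icc (T - k) T) = k + 1 := by rw [Nat.card_Icc]; omega
  have hinsert : insert (T - (k + 1)) (Icc (T - k) T) = Icc (T - (k + 1)) T := by
    ext t
    simp only [mem_insert, mem_Icc]
    omega
  have h := average_le_average_insert_add (s := Icc (T - k) T) (by rw [mem_Icc]; omega)
    (nonempty_Icc.mpr (by omega)) hη hq
  rw [hcard, hinsert] at h
  simpa [tailAverage] using h

theorem stmt_5_general (T : ℕ) (hT : 1 ≤ T) (η q : ℕ → ℝ)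
    (hη_mono : ∀ s t, 1 ≤ s → s ≤ t → t ≤ T → η t ≤ η s)
    (hq_nonneg : ∀ t ∈ Finset.Icc 1 T, 0 ≤ q t) :
    η T * q T ≤ (1 / (T : ℝ)) * ∑ t ∈ Finset.Icc 1 T, η t * q t
      + ∑ k ∈ Finset.Icc 1 (T - 1),
          (1 / ((k : ℝ) * ((k : ℝ) + 1))) *
            ∑ t ∈ Finset.Icc (T - k) T, η t * (q t - q (T - k)) := by
  rw [← tailAverage_zero (fun t => η t * q t), ← tailAverage_sub_one hT]
  refine le_add_sum_Icc_of_le_add fun k hk => ?_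
  simpa using tailAverage_le_succ_add (by omega)
    (fun t ht => by rw [mem_Icc] at ht; exact hη_mono _ t (by omega) (by omega) ht.2)
    (hq_nonneg _ (mem_Icc.mpr ⟨by omega, by omega⟩))

/-- Last-iterate vs average comparison lemma. -/
theorem stmt_5 (T : ℕ) (hT : 1 ≤ T) (η q : ℕ → ℝ)
    (hη_mono : ∀ s t, 1 ≤ s → s ≤ t → t ≤ T → η t ≤ η s)
    (hη_nonneg : ∀ t ∈ Finset.Icc 1 T, 0 ≤ η t)
    (hq_nonneg : ∀ t ∈ Finset.Icc 1 T, 0 ≤ q t) :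
    η T * q T ≤ (1 / (T : ℝ)) * ∑ t ∈ Finset.Icc 1 T, η t * q t
      + ∑ k ∈ Finset.Icc 1 (T - 1),
          (1 / ((k : ℝ) * ((k : ℝ) + 1))) *
            ∑ t ∈ Finset.Icc (T - k) T, η t * (q t - q (T - k)) :=
  stmt_5_general T hT η q hη_mono hq_nonneg
end

section
/- Let ψ(x,S,Q) = sup_{θ∈ℝ} (θx − ψ*(θ,S,Q)) be the Fenchel conjugate in the first argument of ψ*(θ,S,Q) = exp(θ²/(4S²) − Q) for |θ|≤S², exp(|θ|/2 − S²/4 − Q) for |θ|>S². Then for S ≥ 1, Q ≥ 0 and every x ∈ ℝ, ψ(x,S,Q) < S·|x|·(2·ln(1+2x²) + 3Q + 3S). -/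
/-!
On `|θ| ≤ S²` the quadratic branch dominates the exponential one, since
`θ²/(4S²) - |θ|/2 + S²/4 = (|θ| - S²)²/(4S²) ≥ 0`; hence `ψ*(θ) ≥ exp (|θ|/2 - c)` everywhere,
with `c = S²/4 + Q`. The conjugate of `t ↦ exp (t/2 - c)` is computed by the Fenchel–Young
inequality `s y ≤ exp s + y log y - y`, giving `ψ(x) ≤ 2|x| (c + log (2|x|) - 1)` for `x ≠ 0`,
and `ψ(0) ≤ -exp (-c) < 0`. The bound then follows from `2|x| ≤ 1 + 2x²` and `S ≥ 1`.
-/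

open Real

lemma abs_div_two_sub_le_sq_div {s : ℝ} (hs : 0 < s) (θ : ℝ) :
    |θ| / 2 - s / 4 ≤ θ ^ 2 / (4 * s) := by
  rw [le_div_iff₀ (by positivity)]
  nlinarith [sq_abs θ, sq_nonneg (|θ| - s)]

/-- Fenchel–Young inequality for `exp`, whose convex conjugate is `y ↦ y log y - y`. -/
lemma mul_le_exp_add_mul_log_sub {y : ℝ} (hy : 0 < y) (s : ℝ) :
    s * y ≤ exp s + y * log y - y := by
  have h := log_le_sub_one_of_pos (div_pos (exp_pos s) hy)
  rw [log_div (exp_pos s).ne' hy.ne', log_exp, le_sub_iff_add_le, le_div_iff₀ hy] at h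
  linarith

section ExpMinorant

variable {f : ℝ → ℝ} {c : ℝ}

lemma sSup_range_mul_sub_le_of_exp_le (hf : ∀ θ, exp (|θ| / 2 - c) ≤ f θ) {x : ℝ}
    (hx : x ≠ 0) :
    sSup (Set.range fun θ => θ * x - f θ) ≤ 2 * |x| * (c + log (2 * |x|) - 1) := by
  refine csSup_le (Set.range_nonempty _) ?_
  rintro _ ⟨θ, rfl⟩
  have young := mul_le_exp_add_mul_log_sub (by positivity : 0 < 2 * |x|) (|θ| / 2 - c)
  have hθx : θ * x ≤ |θ| * |x| := (le_abs_self _).trans (abs_mul θ x).le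
  linarith [hf θ]

lemma sSup_range_zero_sub_neg (hf : ∀ θ, exp (|θ| / 2 - c) ≤ f θ) :
    sSup (Set.range fun θ => θ * 0 - f θ) < 0 := by
  refine (csSup_le (Set.range_nonempty _) ?_).trans_lt (neg_neg_of_pos (exp_pos (-c)))
  rintro _ ⟨θ, rfl⟩
  have : exp (-c) ≤ exp (|θ| / 2 - c) := exp_le_exp.2 (by linarith [abs_nonneg θ])
  linarith [hf θ]

end ExpMinorant

lemma two_mul_abs_le_one_add_two_mul_sq (x : ℝ) : 2 * |x| ≤ 1 + 2 * x ^ 2 := by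
  nlinarith [sq_abs x, sq_nonneg (|x| - 1)]

lemma two_mul_abs_mul_lt_linearithmic {S Q x : ℝ} (hS : 1 ≤ S) (hQ : 0 ≤ Q) (hx : x ≠ 0) :
    2 * |x| * (S ^ 2 / 4 + Q + log (2 * |x|) - 1)
      < S * |x| * (2 * log (1 + 2 * x ^ 2) + 3 * Q + 3 * S) := by
  have ha : 0 < |x| := abs_pos.2 hx
  have hlog : log (2 * |x|) ≤ log (1 + 2 * x ^ 2) :=
    log_le_log (by positivity) (two_mul_abs_le_one_add_two_mul_sq x)
  have hlog0 : 0 ≤ log (1 + 2 * x ^ 2) := log_nonneg (by nlinarith [sq_nonneg x])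
  suffices S ^ 2 / 2 + 2 * Q + 2 * log (2 * |x|) - 2
      < S * (2 * log (1 + 2 * x ^ 2) + 3 * Q + 3 * S) by nlinarith
  nlinarith [mul_nonneg (sub_nonneg.2 hS) hlog0, mul_nonneg (sub_nonneg.2 hS) hQ]

/-- Linearithmic upper bound on `ψ(x,S,Q)`, the Fenchel conjugate in `θ` of
`ψ*(θ,S,Q)`. -/
theorem stmt_13 (S Q : ℝ) (hS : 1 ≤ S) (hQ : 0 ≤ Q)
    (ψs : ℝ → ℝ)
    (hψs : ∀ θ, ψs θ = if |θ| ≤ S ^ 2 then Real.exp (θ ^ 2 / (4 * S ^ 2) - Q)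
        else Real.exp (|θ| / 2 - S ^ 2 / 4 - Q)) :
    ∀ x : ℝ,
      sSup (Set.range fun θ => θ * x - ψs θ)
        < S * |x| * (2 * Real.log (1 + 2 * x ^ 2) + 3 * Q + 3 * S) := by
  have hminorant : ∀ θ, exp (|θ| / 2 - (S ^ 2 / 4 + Q)) ≤ ψs θ := by
    intro θ
    rw [hψs θ]
    split_ifs
    · exact exp_le_exp.2 (by linarith [abs_div_two_sub_le_sq_div (by positivity : 0 < S ^ 2) θ])
    · exact exp_le_exp.2 (by linarith)
  intro x
  rcases eq_or_ne x 0 with rfl | hx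
  · simpa using sSup_range_zero_sub_neg hminorant
  · exact (sSup_range_mul_sub_le_of_exp_le hminorant hx).trans_lt
      (two_mul_abs_mul_lt_linearithmic hS hQ hx)
end
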